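/- Let n and d be positive integers, ℓ a Kupisch series of type Ã_{n-1}, f(i) = i - ℓ(i) - d + 1, I = { i ∈ ℤ : (i mod n) ∈ J }, ι : ℤ → I the unique order-preserving bijection, and ℓ'(k) = |[f(ι(k)), ι(k)] ∩ I| - d for k ∈ ℤ. Then for every k ∈ ℤ one has ℓ'(k) ≤ ℓ'(k-1) + 1, and moreover ℓ'(k) ≤ ℓ'(k-1). -/

import Mathlib

/-!
Since `ℓ` is a Kupisch series, `f` is monotone, satisfies `f i ≤ i` and commutes with the shift
by `n`. The map `f̄` permutes its periodic points `J`, so `f` maps `I` into itself and is injective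
on `I`; hence `f` is strictly increasing on `I`. For consecutive elements `a < b` of `I`, every
element of `[f b, b] ∩ I` other than `b` lies in `[f a, a] ∩ I` and differs from `f a ∈ I`, so the
window `[f b, b] ∩ I` has at most as many elements as `[f a, a] ∩ I`.
-/

/-- The set of periodic points of the induced map `f̄ : ℤ/nℤ → ℤ/nℤ`. -/
def Jset (n : ℕ) (fbar : ZMod n → ZMod n) : Set (ZMod n) :=
  {j | ∃ N : ℕ, 1 ≤ N ∧ fbar^[N] j = j}

/-- The set of integers whose residue mod `n` lies in `J`. -/
def Iset (n : ℕ) (fbar : ZMod n → ZMod n) : Set ℤ :=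
  {i | (i : ZMod n) ∈ Jset n fbar}

open Set Function

theorem ncard_Icc_inter_le_of_gap {α : Type*} [LinearOrder α] [LocallyFiniteOrder α]
    {S : Set α} {a b c c' : α} (hgap : ∀ x ∈ S, x < b → x ≤ a) (hc : c ∈ S) (hcc' : c < c')
    (hca : c ≤ a) : (Icc c' b ∩ S).ncard ≤ (Icc c a ∩ S).ncard := by
  have hfin : (Icc c a ∩ S).Finite := (finite_Icc c a).inter_of_left S
  have hsub : Icc c' b ∩ S ⊆ insert b ((Icc c a ∩ S) \ {c}) := by
    rintro x ⟨⟨hc'x, hxb⟩, hxS⟩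
    rcases hxb.eq_or_lt with rfl | hxb
    · exact mem_insert x _
    · exact Or.inr ⟨⟨⟨hcc'.le.trans hc'x, hgap x hxS hxb⟩, hxS⟩, (hcc'.trans_le hc'x).ne'⟩
  calc (Icc c' b ∩ S).ncard ≤ (insert b ((Icc c a ∩ S) \ {c})).ncard :=
        ncard_le_ncard hsub (hfin.sdiff.insert b)
    _ ≤ ((Icc c a ∩ S) \ {c}).ncard + 1 := ncard_insert_le _ _
    _ = (Icc c a ∩ S).ncard := ncard_sdiff_singleton_add_one ⟨⟨le_rfl, hca⟩, hc⟩ hfin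

theorem Int.eq_of_map_eq_of_modEq {n : ℕ} (hn : n ≠ 0) {f : ℤ → ℤ}
    (hf : ∀ i, f (i + n) = f i + n) {a b : ℤ} (hab : a ≡ b [ZMOD n]) (hfab : f a = f b) :
    a = b := by
  have hper : Periodic (fun i => f i - i) n := fun i => by simp only [hf]; ring
  obtain ⟨m, hm⟩ := hab.dvd
  have hb : b = a + m * n := by linarith
  have hmn : (m * n : ℤ) = 0 := by
    have := hper.int_mul m a
    simp only [Int.cast_id, ← hb, hfab] at this
    linarith
  have hm0 : m = 0 := by simpa [hn] using hmn
  simp [hb, hm0]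

theorem Jset_eq_periodicPts (n : ℕ) (fbar : ZMod n → ZMod n) :
    Jset n fbar = periodicPts fbar :=
  rfl

section Iset

variable {n : ℕ} {fbar : ZMod n → ZMod n} {f : ℤ → ℤ}

theorem mapsTo_Iset (hfbar : ∀ i : ℤ, fbar (i : ZMod n) = ((f i : ℤ) : ZMod n)) :
    MapsTo f (Iset n fbar) (Iset n fbar) := fun i (hi : (i : ZMod n) ∈ Jset n fbar) => by
  rw [Jset_eq_periodicPts] at hi
  have := (bijOn_periodicPts (f := fbar)).mapsTo hi
  rwa [hfbar, ← Jset_eq_periodicPts] at this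

theorem injOn_Iset (hn : n ≠ 0) (hfbar : ∀ i : ℤ, fbar (i : ZMod n) = ((f i : ℤ) : ZMod n))
    (hf : ∀ i, f (i + n) = f i + n) : InjOn f (Iset n fbar) := by
  intro a ha b hb hfab
  have hmod : (a : ZMod n) = b :=
    (bijOn_periodicPts (f := fbar)).injOn (Jset_eq_periodicPts n fbar ▸ ha)
      (Jset_eq_periodicPts n fbar ▸ hb) (by rw [hfbar, hfbar, hfab])
  exact Int.eq_of_map_eq_of_modEq hn hf ((ZMod.intCast_eq_intCast_iff _ _ _).mp hmod) hfab

end Iset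

theorem ellprime_nonincreasing_general (n d : ℕ) (hn : 0 < n) (ℓ : ℤ → ℤ)
    (hK1 : ∀ i : ℤ, 1 ≤ ℓ i) (hK2 : ∀ i : ℤ, ℓ i ≤ ℓ (i - 1) + 1)
    (hKper : ∀ i : ℤ, ℓ (i + n) = ℓ i)
    (f : ℤ → ℤ) (hf : ∀ i : ℤ, f i = i - ℓ i - d + 1)
    (fbar : ZMod n → ZMod n)
    (hfbar : ∀ i : ℤ, fbar (i : ZMod n) = ((f i : ℤ) : ZMod n))
    (ι : ℤ → ℤ) (hι : StrictMono ι) (hrange : Set.range ι = Iset n fbar)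
    (ℓ' : ℤ → ℤ)
    (hℓ' : ∀ k : ℤ,
      ℓ' k = ((Set.Icc (f (ι k)) (ι k) ∩ Iset n fbar).ncard : ℤ) - d) :
    ∀ k : ℤ, ℓ' k ≤ ℓ' (k - 1) + 1 ∧ ℓ' k ≤ ℓ' (k - 1) := by
  have hfmono : Monotone f := monotone_int_of_le_succ fun i => by
    have := hK2 (i + 1)
    rw [add_sub_cancel_right] at this
    rw [hf, hf]
    omega
  have hfle : ∀ i, f i ≤ i := fun i => by rw [hf]; linarith [hK1 i]
  have hfn : ∀ i, f (i + n) = f i + n := fun i => by rw [hf, hf, hKper]; ring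
  have hmem : ∀ k, ι k ∈ Iset n fbar := fun k => hrange ▸ mem_range_self k
  intro k
  have hgap : ∀ x ∈ Iset n fbar, x < ι k → x ≤ ι (k - 1) := by
    rintro x hx hxk
    obtain ⟨m, rfl⟩ := hrange ▸ hx
    exact hι.monotone (by have := hι.lt_iff_lt.mp hxk; omega)
  have hfk : f (ι (k - 1)) < f (ι k) :=
    (hfmono (hι.monotone (by omega))).lt_of_ne fun h =>
      (hι (by omega : k - 1 < k)).ne (injOn_Iset hn.ne' hfbar hfn (hmem _) (hmem _) h)
  have hcard := ncard_Icc_inter_le_of_gap hgap (mapsTo_Iset hfbar (hmem (k - 1))) hfk (hfle _)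
  rw [hℓ', hℓ']
  omega

/-- with `ℓ' k = |[f(ι k), ι k] ∩ I| - d` one has
`ℓ' k ≤ ℓ' (k-1) + 1` and moreover `ℓ' k ≤ ℓ' (k-1)` for every `k`. -/
theorem ellprime_nonincreasing (n d : ℕ) (hn : 0 < n) (hd : 0 < d) (ℓ : ℤ → ℤ)
    (hK1 : ∀ i : ℤ, 1 ≤ ℓ i) (hK2 : ∀ i : ℤ, ℓ i ≤ ℓ (i - 1) + 1)
    (hKper : ∀ i : ℤ, ℓ (i + n) = ℓ i)
    (f : ℤ → ℤ) (hf : ∀ i : ℤ, f i = i - ℓ i - d + 1)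
    (fbar : ZMod n → ZMod n)
    (hfbar : ∀ i : ℤ, fbar (i : ZMod n) = ((f i : ℤ) : ZMod n))
    (ι : ℤ → ℤ) (hι : StrictMono ι) (hrange : Set.range ι = Iset n fbar)
    (ℓ' : ℤ → ℤ)
    (hℓ' : ∀ k : ℤ,
      ℓ' k = ((Set.Icc (f (ι k)) (ι k) ∩ Iset n fbar).ncard : ℤ) - d) :
    ∀ k : ℤ, ℓ' k ≤ ℓ' (k - 1) + 1 ∧ ℓ' k ≤ ℓ' (k - 1) :=
  ellprime_nonincreasing_general n d hn ℓ hK1 hK2 hKper f hf fbar hfbar ι hι hrange ℓ' hℓ'
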